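/- arXiv:1808.04209 — 3 statements merged into one kernel-verified Lean document; each statement's English description precedes it below -/
import Mathlib

section
/- Let ρ be a positive definite density matrix on Fin s × Fin r with energy functions E_S : Fin s → ℤ, E_R : Fin r → ℤ. Then Πρ and Δρ are positive definite, and the quantum relative entropy of Πρ with respect to Δρ equals the entropy gap: tr( (Πρ) · ( log(Πρ) − log(Δρ) ) ) = S(Δρ) − S(Πρ), where the logarithm of a positive definite Hermitian matrix is defined by applying the real logarithm to its eigenvalues in a spectral decomposition. -/
open Matrix Kronecker BigOperators ComplexOrder

/-- η(x) = −x·log x -/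
noncomputable def entEta (x : ℝ) : ℝ := -x * Real.log x

/-- von Neumann entropy S(ρ) = ∑ η(λ_i(ρ)) using the eigenvalues from the
spectral theorem for Hermitian matrices. -/
noncomputable def vnEntropy {n : Type*} [Fintype n] [DecidableEq n] (ρ : Matrix n n ℂ) : ℝ :=
  if h : ρ.IsHermitian then ∑ i, entEta (h.eigenvalues i) else 0

/-- A density matrix: Hermitian, positive semidefinite, trace one. -/
def IsDensityMatrix {n : Type*} [Fintype n] [DecidableEq n] (ρ : Matrix n n ℂ) : Prop :=
  ρ.IsHermitian ∧ ρ.PosSemidef ∧ ρ.trace = 1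

/-- Pinching of a matrix by a function `f` on the index set. -/
def pinch {I : Type*} {α : Type*} [DecidableEq α] (f : I → α) (M : Matrix I I ℂ) :
    Matrix I I ℂ :=
  Matrix.of fun i j => if f i = f j then M i j else 0

/-- Relative entropy of asymmetry A(ρ) = S(P_f ρ) − S(ρ). -/
noncomputable def asym {I : Type*} [Fintype I] [DecidableEq I] {α : Type*} [DecidableEq α]
    (f : I → α) (ρ : Matrix I I ℂ) : ℝ :=
  vnEntropy (pinch f ρ) - vnEntropy ρ

/-- Energy function of the global dephasing Π. -/
def globalE {s r : ℕ} (ES : Fin s → ℤ) (ER : Fin r → ℤ) : Fin s × Fin r → ℤ :=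
  fun p => ES p.1 + ER p.2

/-- Energy function of the local dephasing Δ. -/
def localE {s r : ℕ} (ES : Fin s → ℤ) (ER : Fin r → ℤ) : Fin s × Fin r → ℤ × ℤ :=
  fun p => (ES p.1, ER p.2)

/-- Logarithm of a Hermitian matrix, via applying the real logarithm to the
eigenvalues in a spectral decomposition. -/
noncomputable def matLog {n : Type*} [Fintype n] [DecidableEq n] (ρ : Matrix n n ℂ) :
    Matrix n n ℂ :=
  if h : ρ.IsHermitian then
    (h.eigenvectorUnitary : Matrix n n ℂ) *
      Matrix.diagonal (fun i => (Real.log (h.eigenvalues i) : ℂ)) *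
      star (h.eigenvectorUnitary : Matrix n n ℂ)
  else 0

/-! The quadratic form of `P_f M` is the sum of the quadratic forms of `M` on the fibres of `f`,
which gives positive definiteness. The matrices with no entries between distinct fibres of `f`
form a closed star subalgebra containing `P_f M`, hence also `log (P_f M)` by the functional
calculus. The trace against such a matrix does not see the entries that `P_f` removes, and
`P_f ∘ P_g = P_f` when `f` refines `g` (here `f` is the local and `g` the global energy), so
`tr (P_g M · log (P_f M)) = tr (P_f M · log (P_f M)) = -S(P_f M)`, while
`tr (P_g M · log (P_g M)) = -S(P_g M)`. -/

section Pinching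

variable {I α β : Type*} [DecidableEq α] [DecidableEq β]

lemma pinch_apply (f : I → α) (M : Matrix I I ℂ) (i j : I) :
    pinch f M i j = if f i = f j then M i j else 0 := rfl

lemma pinch_pinch {f : I → α} {g : I → β} (hfg : ∀ i j, f i = f j → g i = g j)
    (M : Matrix I I ℂ) : pinch f (pinch g M) = pinch f M := by
  ext i j
  by_cases h : f i = f j <;> simp [pinch_apply, h, hfg i j]

lemma pinch_isHermitian (f : I → α) {M : Matrix I I ℂ} (hM : M.IsHermitian) :
    (pinch f M).IsHermitian := by
  ext i j
  by_cases h : f i = f j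
  · simp [pinch_apply, h, ← hM.apply i j]
  · simp [pinch_apply, h, Ne.symm h]

variable [Fintype I]

lemma dotProduct_pinch_mulVec (f : I → α) (M : Matrix I I ℂ) (x : I → ℂ) :
    star x ⬝ᵥ (pinch f M *ᵥ x) = ∑ a ∈ Finset.univ.image f,
      star (fun i => if f i = a then x i else 0) ⬝ᵥ (M *ᵥ fun i => if f i = a then x i else 0) := by
  simp only [dotProduct, mulVec, pinch_apply, Pi.star_apply, Finset.mul_sum, apply_ite star,
    star_zero, ite_mul, mul_ite, zero_mul, mul_zero]
  symm
  rw [Finset.sum_comm]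
  refine Finset.sum_congr rfl fun i _ => ?_
  rw [Finset.sum_comm]
  refine Finset.sum_congr rfl fun j _ => ?_
  by_cases h : f i = f j <;> simp [h, Finset.sum_ite_eq', eq_comm]

lemma pinch_posDef (f : I → α) {M : Matrix I I ℂ} (hM : M.PosDef) : (pinch f M).PosDef := by
  refine .of_dotProduct_mulVec_pos (pinch_isHermitian f hM.isHermitian) fun x hx => ?_
  obtain ⟨i, hi⟩ := Function.ne_iff.mp hx
  rw [dotProduct_pinch_mulVec]
  refine Finset.sum_pos' (fun a _ => hM.posSemidef.dotProduct_mulVec_nonneg _)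
    ⟨f i, Finset.mem_image_of_mem f (Finset.mem_univ i), hM.dotProduct_mulVec_pos fun h => hi ?_⟩
  simpa using congrFun h i

variable [DecidableEq I]

def blockAlgebra (f : I → α) : StarSubalgebra ℂ (Matrix I I ℂ) where
  carrier := {A | ∀ i j, f i ≠ f j → A i j = 0}
  mul_mem' {A B} hA hB i j hij := Finset.sum_eq_zero fun k _ => by
    by_cases hik : f i = f k
    · simp [hB k j (hik ▸ hij)]
    · simp [hA i k hik]
  add_mem' {A B} hA hB i j hij := by simp [hA i j hij, hB i j hij]
  algebraMap_mem' c i j hij := by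
    simp [algebraMap_matrix_apply, show i ≠ j from fun h => hij (h ▸ rfl)]
  star_mem' {A} hA i j hij := by simp [hA j i (Ne.symm hij)]

instance (f : I → α) : IsClosed (blockAlgebra f : Set (Matrix I I ℂ)) := by
  change IsClosed {A : Matrix I I ℂ | ∀ i j, f i ≠ f j → A i j = 0}
  simp only [Set.ofPred_forall]
  exact isClosed_iInter fun i => isClosed_iInter fun j => isClosed_iInter fun _ =>
    isClosed_eq (by fun_prop) continuous_const

lemma pinch_mem_blockAlgebra (f : I → α) (M : Matrix I I ℂ) : pinch f M ∈ blockAlgebra f :=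
  fun i j h => by simp [pinch_apply, h]

lemma trace_pinch_mul {f : I → α} {X : Matrix I I ℂ} (hX : X ∈ blockAlgebra f)
    (A : Matrix I I ℂ) : (pinch f A * X).trace = (A * X).trace := by
  simp only [trace, diag, mul_apply, pinch_apply]
  refine Finset.sum_congr rfl fun i _ => Finset.sum_congr rfl fun j _ => ?_
  by_cases h : f i = f j
  · simp [h]
  · simp [h, hX j i (Ne.symm h)]

end Pinching

section MatrixLog

variable {I : Type*} [Fintype I] [DecidableEq I]

lemma matLog_eq_cfc {M : Matrix I I ℂ} (hM : M.IsHermitian) : matLog M = cfc Real.log M := by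
  rw [matLog, dif_pos hM, hM.cfc_eq]
  rfl

lemma matLog_mem_blockAlgebra {α : Type*} [DecidableEq α] {f : I → α} {M : Matrix I I ℂ}
    (hM : M.IsHermitian) (h : M ∈ blockAlgebra f) : matLog M ∈ blockAlgebra f := by
  rw [matLog_eq_cfc hM]
  exact cfc_mem (𝕜' := ℂ) Real.log h

lemma trace_cfc {M : Matrix I I ℂ} (hM : M.IsHermitian) (g : ℝ → ℝ) :
    (cfc g M).trace = ∑ i, (g (hM.eigenvalues i) : ℂ) := by
  rw [hM.cfc_eq, IsHermitian.cfc, Unitary.conjStarAlgAut_apply, trace_mul_cycle,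
    Unitary.star_mul_self_of_mem hM.eigenvectorUnitary.2, one_mul, trace_diagonal]
  rfl

lemma trace_mul_matLog_self {M : Matrix I I ℂ} (hM : M.IsHermitian) :
    (M * matLog M).trace = ((-vnEntropy M : ℝ) : ℂ) := by
  have hmul : M * matLog M = cfc (fun x => x * Real.log x) M := by
    rw [matLog_eq_cfc hM, cfc_mul (fun x => x) Real.log M (hg := M.finite_real_spectrum.continuousOn _),
      cfc_id' ℝ M]
  rw [hmul, trace_cfc hM, vnEntropy, dif_pos hM]
  simp [entEta]

theorem trace_pinch_mul_matLog_sub_matLog {α β : Type*} [DecidableEq α] [DecidableEq β]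
    {f : I → α} {g : I → β} (hfg : ∀ i j, f i = f j → g i = g j) {M : Matrix I I ℂ}
    (hM : M.IsHermitian) :
    (pinch g M * (matLog (pinch g M) - matLog (pinch f M))).trace =
      ((vnEntropy (pinch f M) - vnEntropy (pinch g M) : ℝ) : ℂ) := by
  have hlog : matLog (pinch f M) ∈ blockAlgebra f :=
    matLog_mem_blockAlgebra (pinch_isHermitian f hM) (pinch_mem_blockAlgebra f M)
  rw [mul_sub, trace_sub, trace_mul_matLog_self (pinch_isHermitian g hM), ← trace_pinch_mul hlog,
    pinch_pinch hfg, trace_mul_matLog_self (pinch_isHermitian f hM)]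
  push_cast
  ring

end MatrixLog

lemma globalE_eq_of_localE_eq {s r : ℕ} (ES : Fin s → ℤ) (ER : Fin r → ℤ) (p q : Fin s × Fin r)
    (h : localE ES ER p = localE ES ER q) : globalE ES ER p = globalE ES ER q := by
  simp only [localE, Prod.mk.injEq] at h
  simp only [globalE, h.1, h.2]

theorem relEntropy_eq_entropy_gap_general {s r : ℕ}
    (ρ : Matrix (Fin s × Fin r) (Fin s × Fin r) ℂ)
    (ES : Fin s → ℤ) (ER : Fin r → ℤ)
    (hpd : ρ.PosDef) :
    (pinch (globalE ES ER) ρ).PosDef ∧ (pinch (localE ES ER) ρ).PosDef ∧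
      (pinch (globalE ES ER) ρ *
          (matLog (pinch (globalE ES ER) ρ) - matLog (pinch (localE ES ER) ρ))).trace =
        ((vnEntropy (pinch (localE ES ER) ρ) - vnEntropy (pinch (globalE ES ER) ρ) : ℝ) : ℂ) :=
  ⟨pinch_posDef _ hpd, pinch_posDef _ hpd, trace_pinch_mul_matLog_sub_matLog
    (globalE_eq_of_localE_eq ES ER) hpd.isHermitian⟩

/-- for a positive definite density matrix ρ, Πρ and Δρ are positive
definite and the quantum relative entropy S(Πρ‖Δρ) equals the entropy gap
S(Δρ) − S(Πρ). -/
theorem relEntropy_eq_entropy_gap {s r : ℕ}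
    (ρ : Matrix (Fin s × Fin r) (Fin s × Fin r) ℂ)
    (ES : Fin s → ℤ) (ER : Fin r → ℤ)
    (hρ : IsDensityMatrix ρ) (hpd : ρ.PosDef) :
    (pinch (globalE ES ER) ρ).PosDef ∧ (pinch (localE ES ER) ρ).PosDef ∧
      (pinch (globalE ES ER) ρ *
          (matLog (pinch (globalE ES ER) ρ) - matLog (pinch (localE ES ER) ρ))).trace =
        ((vnEntropy (pinch (localE ES ER) ρ) - vnEntropy (pinch (globalE ES ER) ρ) : ℝ) : ℂ) :=
  relEntropy_eq_entropy_gap_general ρ ES ER hpd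
end

section
/- Let p : Fin c → ℝ be a probability vector, θ : Fin c → ℝ, and for each i let U_i = diag(m ↦ exp(−i·θ_i·E_S m)) ⊗ diag(n ↦ exp(−i·θ_i·E_R n)). Let ρ_S, ρ_R be density matrices on Fin s, Fin r, set ρ = ρ_S ⊗ ρ_R, and assume the finite mixture realizes the global twirl: ∑_i p_i · U_i ρ U_i† = Πρ. Define the cq-state Ω on (Fin c) × (Fin s × Fin r) as the block-diagonal matrix whose i-th diagonal block is p_i · U_i ρ U_i† (all off-diagonal blocks zero), and define all marginals Ω_SR, Ω_S, Ω_R, Ω_SC, Ω_RC, Ω_C by entrywise partial traces (summing over the traced indices). Then the interaction information equals the mutual asymmetry: [S(Ω_S) + S(Ω_R) − S(Ω_SR)] − [S(Ω_SC) + S(Ω_RC) − S(Ω) − S(Ω_C)] = A(ρ_S) + A(ρ_R) − A(ρ_S ⊗ ρ_R). -/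
open Matrix Kronecker BigOperators ComplexOrder

/-- Partial trace over the second factor. -/
noncomputable def ptraceSnd {a b : Type*} [Fintype b] (X : Matrix (a × b) (a × b) ℂ) :
    Matrix a a ℂ :=
  Matrix.of fun i i' => ∑ j, X (i, j) (i', j)

/-- Partial trace over the first factor. -/
noncomputable def ptraceFst {a b : Type*} [Fintype a] (X : Matrix (a × b) (a × b) ℂ) :
    Matrix b b ℂ :=
  Matrix.of fun j j' => ∑ i, X (i, j) (i, j')

/-- The unitary U_θ = diag(exp(−iθE_S)) ⊗ diag(exp(−iθE_R)). -/
noncomputable def twirlU {s r : ℕ} (ES : Fin s → ℤ) (ER : Fin r → ℤ) (θ : ℝ) :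
    Matrix (Fin s × Fin r) (Fin s × Fin r) ℂ :=
  (Matrix.diagonal fun m => Complex.exp (-Complex.I * θ * (ES m : ℂ))) ⊗ₖ
    (Matrix.diagonal fun n => Complex.exp (-Complex.I * θ * (ER n : ℂ)))

/-- Marginal on C and S of a cq-state on C ⊗ (S ⊗ R) (tracing out R). -/
noncomputable def margSC {c s r : ℕ}
    (Ω : Matrix (Fin c × (Fin s × Fin r)) (Fin c × (Fin s × Fin r)) ℂ) :
    Matrix (Fin c × Fin s) (Fin c × Fin s) ℂ :=
  Matrix.of fun x y => ∑ n, Ω (x.1, (x.2, n)) (y.1, (y.2, n))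

/-- Marginal on C and R of a cq-state on C ⊗ (S ⊗ R) (tracing out S). -/
noncomputable def margRC {c s r : ℕ}
    (Ω : Matrix (Fin c × (Fin s × Fin r)) (Fin c × (Fin s × Fin r)) ℂ) :
    Matrix (Fin c × Fin r) (Fin c × Fin r) ℂ :=
  Matrix.of fun x y => ∑ m, Ω (x.1, (m, x.2)) (y.1, (m, y.2))

/-!
Ω is the cq-state with blocks `p i • U_i ρ U_iᴴ`, and the marginals Ω_SC, Ω_RC are cq-states
with blocks unitarily equivalent to ρ_S and ρ_R, because each `U_i` is a tensor product of
diagonal unitaries. The entropy of a block-diagonal matrix is the sum of the entropies of its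
blocks, and `S(p • σ) = p S(σ) + η(p)` for `tr σ = 1`; hence `S(Ω) = H(p) + S(ρ)`,
`S(Ω_SC) = H(p) + S(ρ_S)`, `S(Ω_RC) = H(p) + S(ρ_R)` and `S(Ω_C) = H(p)`. The twirl hypothesis
says `Ω_SR = Π ρ`, whose partial traces are `Δ_S ρ_S` and `Δ_R ρ_R`. Both sides are then
`S(Δ_S ρ_S) + S(Δ_R ρ_R) - S(Π ρ) - S(ρ_S) - S(ρ_R) + S(ρ)`.
-/

open Polynomial

lemma entEta_mul (a b : ℝ) : entEta (a * b) = a * entEta b + b * entEta a := by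
  rcases eq_or_ne a 0 with rfl | ha
  · simp [entEta]
  rcases eq_or_ne b 0 with rfl | hb
  · simp [entEta]
  simp only [entEta, Real.log_mul ha hb]
  ring

lemma Matrix.IsHermitian.kronecker {R n m : Type*} [CommSemiring R] [StarRing R]
    {A : Matrix n n R} {B : Matrix m m R} (hA : A.IsHermitian) (hB : B.IsHermitian) :
    (A ⊗ₖ B).IsHermitian := by
  rw [IsHermitian, conjTranspose_kronecker, hA, hB]

lemma charpoly_blockDiagonal {R n ι : Type*} [CommRing R] [Fintype n] [DecidableEq n]
    [Fintype ι] [DecidableEq ι] (B : ι → Matrix n n R) :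
    (blockDiagonal B).charpoly = ∏ i, (B i).charpoly := by
  have : charmatrix (blockDiagonal B) = blockDiagonal fun i => charmatrix (B i) := by
    ext ⟨x, i⟩ ⟨y, j⟩
    simp only [charmatrix_apply, blockDiagonal_apply, Prod.mk.injEq, diagonal_apply]
    split_ifs <;> simp_all
  rw [charpoly, this, det_blockDiagonal]
  rfl

lemma trace_unitary_conj {n : Type*} [Fintype n] [DecidableEq n] {U : Matrix n n ℂ}
    (hU : U ∈ unitaryGroup n ℂ) (A : Matrix n n ℂ) : (U * A * Uᴴ).trace = A.trace := by
  rw [trace_mul_cycle, ← star_eq_conjTranspose, (mem_unitaryGroup_iff').mp hU, one_mul]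

section VonNeumannEntropy

variable {n m : Type*} [Fintype n] [DecidableEq n] [Fintype m] [DecidableEq m]

lemma vnEntropy_eq_sum_roots_charpoly {A : Matrix n n ℂ} (hA : A.IsHermitian) :
    vnEntropy A = (A.charpoly.roots.map fun z => entEta z.re).sum := by
  rw [vnEntropy, dif_pos hA, hA.roots_charpoly_eq_eigenvalues, Multiset.map_map]
  simp only [Complex.coe_algebraMap, Function.comp_def, Complex.ofReal_re, Finset.sum_map_val]

lemma vnEntropy_eq_of_charpoly_eq {A : Matrix n n ℂ} {B : Matrix m m ℂ} (hA : A.IsHermitian)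
    (hB : B.IsHermitian) (h : A.charpoly = B.charpoly) : vnEntropy A = vnEntropy B := by
  rw [vnEntropy_eq_sum_roots_charpoly hA, vnEntropy_eq_sum_roots_charpoly hB, h]

lemma vnEntropy_diagonal (d : n → ℝ) :
    vnEntropy (diagonal fun i => (d i : ℂ)) = ∑ i, entEta (d i) := by
  rw [vnEntropy_eq_sum_roots_charpoly (isHermitian_diagonal_of_self_adjoint _
      (by ext i; simp)),
    charpoly_diagonal, roots_prod _ _ (by simp [Finset.prod_ne_zero_iff, X_sub_C_ne_zero])]
  simp only [roots_X_sub_C, Multiset.bind_singleton, Multiset.map_map, Function.comp_apply,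
    Complex.ofReal_re, Finset.sum_map_val]

lemma vnEntropy_unitary_conj {U A : Matrix n n ℂ} (hU : U ∈ unitaryGroup n ℂ)
    (hA : A.IsHermitian) : vnEntropy (U * A * Uᴴ) = vnEntropy A := by
  refine vnEntropy_eq_of_charpoly_eq (isHermitian_mul_mul_conjTranspose U hA) hA ?_
  rw [charpoly_mul_comm, ← mul_assoc, ← star_eq_conjTranspose,
    (mem_unitaryGroup_iff').mp hU, one_mul]

lemma vnEntropy_reindex (e : n ≃ m) {A : Matrix n n ℂ} (hA : A.IsHermitian) :
    vnEntropy (reindex e e A) = vnEntropy A :=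
  vnEntropy_eq_of_charpoly_eq (hA.submatrix _) hA (charpoly_reindex e A)

lemma vnEntropy_blockDiagonal {ι : Type*} [Fintype ι] [DecidableEq ι] (B : ι → Matrix n n ℂ)
    (hB : ∀ i, (B i).IsHermitian) : vnEntropy (blockDiagonal B) = ∑ i, vnEntropy (B i) := by
  rw [vnEntropy_eq_sum_roots_charpoly (isHermitian_blockDiagonal_iff.mpr hB),
    charpoly_blockDiagonal,
    roots_prod _ _ (Finset.prod_ne_zero_iff.mpr fun i _ => (charpoly_monic _).ne_zero),
    Multiset.map_bind, Multiset.sum_bind]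
  simp only [vnEntropy_eq_sum_roots_charpoly (hB _), Finset.sum_map_val]

lemma vnEntropy_smul {A : Matrix n n ℂ} (hA : A.IsHermitian) (t : ℝ) :
    vnEntropy ((t : ℂ) • A) = t * vnEntropy A + A.trace.re * entEta t := by
  set V := (hA.eigenvectorUnitary : Matrix n n ℂ)
  have hdiag : (t : ℂ) • A = V * diagonal (fun i => ((t * hA.eigenvalues i : ℝ) : ℂ)) * Vᴴ := by
    conv_lhs => rw [hA.spectral_theorem, Unitary.conjStarAlgAut_apply]
    rw [← Matrix.smul_mul, ← Matrix.mul_smul, ← diagonal_smul]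
    simp only [Complex.ofReal_mul]
    rfl
  rw [hdiag, vnEntropy_unitary_conj hA.eigenvectorUnitary.2
      (isHermitian_diagonal_of_self_adjoint _ (by ext i; simp)),
    vnEntropy_diagonal, vnEntropy, dif_pos hA, hA.trace_eq_sum_eigenvalues]
  simp only [entEta_mul, Finset.sum_add_distrib, ← Finset.mul_sum, ← Finset.sum_mul]
  simp only [Complex.coe_algebraMap, Complex.re_sum, Complex.ofReal_re]

end VonNeumannEntropy

section CqState

variable {ι β : Type*} [DecidableEq ι]

def cqState (p : ι → ℝ) (σ : ι → Matrix β β ℂ) : Matrix (ι × β) (ι × β) ℂ :=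
  Matrix.of fun x y => if x.1 = y.1 then (p x.1 : ℂ) * σ x.1 x.2 y.2 else 0

lemma cqState_eq_reindex_blockDiagonal [DecidableEq β] (p : ι → ℝ) (σ : ι → Matrix β β ℂ) :
    cqState p σ = reindex (Equiv.prodComm β ι) (Equiv.prodComm β ι)
      (blockDiagonal fun i => (p i : ℂ) • σ i) := by
  ext ⟨i, x⟩ ⟨j, y⟩
  simp [cqState, blockDiagonal_apply]

lemma vnEntropy_cqState [Fintype ι] [Fintype β] [DecidableEq β] (p : ι → ℝ)
    {σ : ι → Matrix β β ℂ} (hσ : ∀ i, (σ i).IsHermitian) (htr : ∀ i, (σ i).trace = 1) :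
    vnEntropy (cqState p σ) = ∑ i, entEta (p i) + ∑ i, p i * vnEntropy (σ i) := by
  have hblock : ∀ i, ((p i : ℂ) • σ i).IsHermitian := fun i =>
    (hσ i).smul (Complex.conj_ofReal (p i))
  rw [cqState_eq_reindex_blockDiagonal,
    vnEntropy_reindex _ (isHermitian_blockDiagonal_iff.mpr hblock),
    vnEntropy_blockDiagonal _ hblock, ← Finset.sum_add_distrib]
  refine Finset.sum_congr rfl fun i _ => ?_
  rw [vnEntropy_smul (hσ i), htr i, Complex.one_re, one_mul, add_comm]

lemma vnEntropy_cqState_unitary_conj [Fintype ι] [Fintype β] [DecidableEq β] {p : ι → ℝ}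
    (hp : ∑ i, p i = 1) {U : ι → Matrix β β ℂ} (hU : ∀ i, U i ∈ unitaryGroup β ℂ)
    {ρ : Matrix β β ℂ} (hρ : ρ.IsHermitian) (htr : ρ.trace = 1) :
    vnEntropy (cqState p fun i => U i * ρ * (U i)ᴴ) = ∑ i, entEta (p i) + vnEntropy ρ := by
  rw [vnEntropy_cqState p (fun i => isHermitian_mul_mul_conjTranspose _ hρ)
    (fun i => by rw [trace_unitary_conj (hU i), htr])]
  simp only [vnEntropy_unitary_conj (hU _) hρ, ← Finset.sum_mul, hp, one_mul]

lemma ptraceFst_cqState [Fintype ι] (p : ι → ℝ) (σ : ι → Matrix β β ℂ) :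
    ptraceFst (cqState p σ) = ∑ i, (p i : ℂ) • σ i := by
  ext x y
  simp [ptraceFst, cqState, Matrix.sum_apply]

lemma ptraceSnd_cqState [Fintype β] (p : ι → ℝ) {σ : ι → Matrix β β ℂ}
    (htr : ∀ i, (σ i).trace = 1) :
    ptraceSnd (cqState p σ) = diagonal fun i => (p i : ℂ) := by
  ext i j
  rcases eq_or_ne i j with rfl | hij
  · simp [ptraceSnd, cqState, ← Finset.mul_sum, show ∀ i, ∑ x, σ i x x = 1 from htr]
  · simp [ptraceSnd, cqState, hij]

end CqState

lemma margSC_cqState_kronecker {c s r : ℕ} (p : Fin c → ℝ)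
    (σ : Fin c → Matrix (Fin s) (Fin s) ℂ) {τ : Fin c → Matrix (Fin r) (Fin r) ℂ}
    (hτ : ∀ i, (τ i).trace = 1) :
    margSC (cqState p fun i => σ i ⊗ₖ τ i) = cqState p σ := by
  ext ⟨i, m⟩ ⟨j, m'⟩
  rcases eq_or_ne i j with rfl | hij
  · simp [margSC, cqState, ← Finset.mul_sum, show ∀ i, ∑ n, τ i n n = 1 from hτ]
  · simp [margSC, cqState, hij]

lemma margRC_cqState_kronecker {c s r : ℕ} (p : Fin c → ℝ)
    {σ : Fin c → Matrix (Fin s) (Fin s) ℂ} (τ : Fin c → Matrix (Fin r) (Fin r) ℂ)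
    (hσ : ∀ i, (σ i).trace = 1) :
    margRC (cqState p fun i => σ i ⊗ₖ τ i) = cqState p τ := by
  ext ⟨i, n⟩ ⟨j, n'⟩
  rcases eq_or_ne i j with rfl | hij
  · simp [margRC, cqState, ← Finset.mul_sum, ← Finset.sum_mul,
      show ∀ i, ∑ m, σ i m m = 1 from hσ]
  · simp [margRC, cqState, hij]

lemma ptraceSnd_pinch_globalE_kronecker {s r : ℕ} (ES : Fin s → ℤ) (ER : Fin r → ℤ)
    (A : Matrix (Fin s) (Fin s) ℂ) (B : Matrix (Fin r) (Fin r) ℂ) :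
    ptraceSnd (pinch (globalE ES ER) (A ⊗ₖ B)) = B.trace • pinch ES A := by
  ext m m'
  by_cases h : ES m = ES m' <;>
    simp [ptraceSnd, pinch, globalE, h, ← Finset.mul_sum, trace, mul_comm]

lemma ptraceFst_pinch_globalE_kronecker {s r : ℕ} (ES : Fin s → ℤ) (ER : Fin r → ℤ)
    (A : Matrix (Fin s) (Fin s) ℂ) (B : Matrix (Fin r) (Fin r) ℂ) :
    ptraceFst (pinch (globalE ES ER) (A ⊗ₖ B)) = A.trace • pinch ER B := by
  ext n n'
  by_cases h : ER n = ER n' <;>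
    simp [ptraceFst, pinch, globalE, h, ← Finset.sum_mul, trace]

noncomputable def phaseDiag {n : Type*} [DecidableEq n] (E : n → ℤ) (θ : ℝ) : Matrix n n ℂ :=
  diagonal fun m => Complex.exp (-Complex.I * θ * (E m : ℂ))

lemma phaseDiag_mem_unitaryGroup {n : Type*} [Fintype n] [DecidableEq n] (E : n → ℤ) (θ : ℝ) :
    phaseDiag E θ ∈ unitaryGroup n ℂ := by
  rw [mem_unitaryGroup_iff', star_eq_conjTranspose, phaseDiag, diagonal_conjTranspose,
    diagonal_mul_diagonal, ← diagonal_one]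
  congr 1
  ext m
  rw [Pi.star_apply, Complex.star_def, ← Complex.exp_conj, ← Complex.exp_add,
    Complex.exp_eq_one_iff]
  exact ⟨0, by apply Complex.ext <;> simp⟩

lemma twirlU_eq_kronecker {s r : ℕ} (ES : Fin s → ℤ) (ER : Fin r → ℤ) (θ : ℝ) :
    twirlU ES ER θ = phaseDiag ES θ ⊗ₖ phaseDiag ER θ :=
  rfl

lemma twirlU_conj_kronecker {s r : ℕ} (ES : Fin s → ℤ) (ER : Fin r → ℤ) (θ : ℝ)
    (A : Matrix (Fin s) (Fin s) ℂ) (B : Matrix (Fin r) (Fin r) ℂ) :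
    twirlU ES ER θ * (A ⊗ₖ B) * (twirlU ES ER θ)ᴴ =
      (phaseDiag ES θ * A * (phaseDiag ES θ)ᴴ) ⊗ₖ (phaseDiag ER θ * B * (phaseDiag ER θ)ᴴ) := by
  rw [twirlU_eq_kronecker, conjTranspose_kronecker, mul_kronecker_mul, mul_kronecker_mul]

lemma twirlU_mem_unitaryGroup {s r : ℕ} (ES : Fin s → ℤ) (ER : Fin r → ℤ) (θ : ℝ) :
    twirlU ES ER θ ∈ unitaryGroup (Fin s × Fin r) ℂ :=
  kronecker_mem_unitary (phaseDiag_mem_unitaryGroup ES θ) (phaseDiag_mem_unitaryGroup ER θ)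

theorem interaction_information_eq_mutual_asymmetry_general {c s r : ℕ}
    (p : Fin c → ℝ) (hp1 : ∑ i, p i = 1)
    (θ : Fin c → ℝ)
    (ρS : Matrix (Fin s) (Fin s) ℂ) (ρR : Matrix (Fin r) (Fin r) ℂ)
    (ES : Fin s → ℤ) (ER : Fin r → ℤ)
    (hS : IsDensityMatrix ρS) (hR : IsDensityMatrix ρR)
    (htwirl : ∑ i, (p i : ℂ) •
        (twirlU ES ER (θ i) * (ρS ⊗ₖ ρR) * (twirlU ES ER (θ i))ᴴ) =
      pinch (globalE ES ER) (ρS ⊗ₖ ρR))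
    (Ω : Matrix (Fin c × (Fin s × Fin r)) (Fin c × (Fin s × Fin r)) ℂ)
    (hΩ : ∀ x y : Fin c × (Fin s × Fin r),
      Ω x y = if x.1 = y.1 then
          (p x.1 : ℂ) *
            (twirlU ES ER (θ x.1) * (ρS ⊗ₖ ρR) * (twirlU ES ER (θ x.1))ᴴ) x.2 y.2
        else 0) :
    (vnEntropy (ptraceSnd (ptraceFst Ω)) + vnEntropy (ptraceFst (ptraceFst Ω)) -
        vnEntropy (ptraceFst Ω)) -
      (vnEntropy (margSC Ω) + vnEntropy (margRC Ω) - vnEntropy Ω -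
        vnEntropy (ptraceSnd Ω)) =
    asym ES ρS + asym ER ρR - asym (globalE ES ER) (ρS ⊗ₖ ρR) := by
  obtain ⟨hSh, -, hStr⟩ := hS
  obtain ⟨hRh, -, hRtr⟩ := hR
  have htrS i : (phaseDiag ES (θ i) * ρS * (phaseDiag ES (θ i))ᴴ).trace = 1 := by
    rw [trace_unitary_conj (phaseDiag_mem_unitaryGroup ES (θ i)), hStr]
  have htrR i : (phaseDiag ER (θ i) * ρR * (phaseDiag ER (θ i))ᴴ).trace = 1 := by
    rw [trace_unitary_conj (phaseDiag_mem_unitaryGroup ER (θ i)), hRtr]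
  have hΩcq :
      Ω = cqState p fun i => twirlU ES ER (θ i) * (ρS ⊗ₖ ρR) * (twirlU ES ER (θ i))ᴴ := by
    ext x y
    exact hΩ x y
  have hΩSR : ptraceFst Ω = pinch (globalE ES ER) (ρS ⊗ₖ ρR) := by
    rw [hΩcq, ptraceFst_cqState, htwirl]
  have hΩSC :
      margSC Ω = cqState p fun i => phaseDiag ES (θ i) * ρS * (phaseDiag ES (θ i))ᴴ := by
    simp only [hΩcq, twirlU_conj_kronecker, margSC_cqState_kronecker p _ htrR]
  have hΩRC :
      margRC Ω = cqState p fun i => phaseDiag ER (θ i) * ρR * (phaseDiag ER (θ i))ᴴ := by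
    simp only [hΩcq, twirlU_conj_kronecker, margRC_cqState_kronecker p _ htrS]
  have hΩC : ptraceSnd Ω = diagonal fun i => (p i : ℂ) := by
    simp only [hΩcq, twirlU_conj_kronecker]
    exact ptraceSnd_cqState p fun i => by rw [trace_kronecker, htrS, htrR, one_mul]
  rw [hΩSR, ptraceSnd_pinch_globalE_kronecker, ptraceFst_pinch_globalE_kronecker, hStr, hRtr,
    one_smul, one_smul, hΩSC, hΩRC, hΩC, vnEntropy_diagonal, hΩcq,
    vnEntropy_cqState_unitary_conj hp1 (twirlU_mem_unitaryGroup ES ER <| θ ·)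
      (hSh.kronecker hRh) (by rw [trace_kronecker, hStr, hRtr, one_mul]),
    vnEntropy_cqState_unitary_conj hp1 (phaseDiag_mem_unitaryGroup ES <| θ ·) hSh hStr,
    vnEntropy_cqState_unitary_conj hp1 (phaseDiag_mem_unitaryGroup ER <| θ ·) hRh hRtr, asym,
    asym, asym]
  ring

/-- the interaction information of the cq-state equals the mutual
asymmetry of the product state. -/
theorem interaction_information_eq_mutual_asymmetry {c s r : ℕ}
    (p : Fin c → ℝ) (hp0 : ∀ i, 0 ≤ p i) (hp1 : ∑ i, p i = 1)
    (θ : Fin c → ℝ)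
    (ρS : Matrix (Fin s) (Fin s) ℂ) (ρR : Matrix (Fin r) (Fin r) ℂ)
    (ES : Fin s → ℤ) (ER : Fin r → ℤ)
    (hS : IsDensityMatrix ρS) (hR : IsDensityMatrix ρR)
    (htwirl : ∑ i, (p i : ℂ) •
        (twirlU ES ER (θ i) * (ρS ⊗ₖ ρR) * (twirlU ES ER (θ i))ᴴ) =
      pinch (globalE ES ER) (ρS ⊗ₖ ρR))
    (Ω : Matrix (Fin c × (Fin s × Fin r)) (Fin c × (Fin s × Fin r)) ℂ)
    (hΩ : ∀ x y : Fin c × (Fin s × Fin r),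
      Ω x y = if x.1 = y.1 then
          (p x.1 : ℂ) *
            (twirlU ES ER (θ x.1) * (ρS ⊗ₖ ρR) * (twirlU ES ER (θ x.1))ᴴ) x.2 y.2
        else 0) :
    (vnEntropy (ptraceSnd (ptraceFst Ω)) + vnEntropy (ptraceFst (ptraceFst Ω)) -
        vnEntropy (ptraceFst Ω)) -
      (vnEntropy (margSC Ω) + vnEntropy (margRC Ω) - vnEntropy Ω -
        vnEntropy (ptraceSnd Ω)) =
    asym ES ρS + asym ER ρR - asym (globalE ES ER) (ρS ⊗ₖ ρR) :=
  interaction_information_eq_mutual_asymmetry_general p hp1 θ ρS ρR ES ER hS hR htwirl Ω hΩ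
end

section
/- (High reference localization.) Let d ≥ 1, s = 2 with E_S(m) = m, and r = d with E_R(n) = n. Let ρ_S be the 2×2 matrix with all entries 1/2 (the state |+⟩⟨+|), and let ρ_R be the d×d matrix with all entries 1/d (the maximally coherent clock state). Then A(ρ_S) = log 2, A(ρ_R) = log d, A(ρ_S ⊗ ρ_R) = log d + (log 2)/d, and the mutual asymmetry is A(ρ_S) + A(ρ_R) − A(ρ_S ⊗ ρ_R) = (1 − 1/d)·log 2. -/
open Matrix Kronecker BigOperators ComplexOrder

/-!
The three states are rank-one projections, so their entropy vanishes and each asymmetry is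
the entropy of a pinched uniform state `P = pinch f (c J)`, `J` the all-ones matrix. Such a
`P` is block diagonal with blocks `c J` of the block sizes `N`. When every `N ≤ 2`,
`P * P = diag (N c) * P` gives `P (P - c) (P - 2c) = 0`, so the spectrum lies in `{0, c, 2c}`,
where `η` agrees with a quadratic polynomial; the entropy is then a combination of `tr P` and
`tr P²`, hence a sum over the blocks. For the global dephasing of the qubit–clock state the
total energies `0` and `d` are nondegenerate and all others doubly degenerate, with
`c = 1 / (2d)`.
-/

open Polynomial

namespace Matrix.IsHermitian

variable {n 𝕜 : Type*} [RCLike 𝕜] [Fintype n] [DecidableEq n] {A : Matrix n n 𝕜}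

lemma trace_cfc (hA : A.IsHermitian) (f : ℝ → ℝ) :
    (cfc f A).trace = ∑ i, (f (hA.eigenvalues i) : 𝕜) := by
  rw [hA.cfc_eq, IsHermitian.cfc, Unitary.conjStarAlgAut_apply, trace_mul_cycle,
    Unitary.coe_star_mul_self, one_mul, trace_diagonal]
  rfl

end Matrix.IsHermitian

section Entropy

variable {n : Type*} [Fintype n] [DecidableEq n] {A : Matrix n n ℂ}

lemma vnEntropy_eq_trace_cfc (hA : A.IsHermitian) : (vnEntropy A : ℂ) = (cfc entEta A).trace := by
  rw [vnEntropy, dif_pos hA, hA.trace_cfc]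
  push_cast
  rfl

lemma vnEntropy_eq_trace_aeval (hA : A.IsHermitian) {p q : ℝ[X]} (hp : aeval A p = 0)
    (hq : ∀ x, p.IsRoot x → entEta x = q.eval x) : (vnEntropy A : ℂ) = (aeval A q).trace := by
  have hroots : (spectrum ℝ A).EqOn p.eval 0 :=
    eqOn_of_cfc_eq_cfc (by rw [cfc_polynomial p A, hp, cfc_zero])
  rw [vnEntropy_eq_trace_cfc hA, ← cfc_polynomial q A, cfc_congr fun x hx => hq x (hroots hx)]

lemma vnEntropy_eq_zero_of_isIdempotentElem (hA : A.IsHermitian) (hA' : IsIdempotentElem A) :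
    vnEntropy A = 0 := by
  have h := vnEntropy_eq_trace_aeval hA (p := X ^ 2 - X) (q := 0) (by simp [sq, hA'.eq])
    fun x hx => by
      have : x * (x - 1) = 0 := by simpa [sq, mul_sub] using hx
      rcases mul_eq_zero.1 this with h | h
      · simp [h, entEta]
      · simp [sub_eq_zero.1 h, entEta]
  rw [map_zero, trace_zero] at h
  exact_mod_cast h

end Entropy

lemma Matrix.IsHermitian.pinch {I α : Type*} [DecidableEq α] (f : I → α) {M : Matrix I I ℂ}
    (hM : M.IsHermitian) : (pinch f M).IsHermitian := by
  ext i j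
  simp only [_root_.pinch, conjTranspose_apply, of_apply, eq_comm (a := f j)]
  split_ifs
  · exact hM.apply i j
  · exact star_zero _

lemma isHermitian_const {I : Type*} (c : ℝ) :
    (of fun _ _ => (c : ℂ) : Matrix I I ℂ).IsHermitian := by
  ext i j
  simp

section Pinch

variable {I α : Type*} [Fintype I] [DecidableEq α] (f : I → α)

def blockSize (i : I) : ℕ := (Finset.univ.filter fun k => f k = f i).card

lemma blockSize_eq_one_or_two (hN : ∀ i, blockSize f i ≤ 2) (i : I) :
    blockSize f i = 1 ∨ blockSize f i = 2 := by
  have : 0 < blockSize f i := Finset.card_pos.2 ⟨i, by simp⟩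
  have := hN i
  omega

lemma blockSize_eq_one_iff (i : I) : blockSize f i = 1 ↔ ∀ j, f j = f i → j = i := by
  simp only [blockSize, Finset.card_eq_one, Finset.eq_singleton_iff_unique_mem,
    Finset.mem_filter_univ]
  exact ⟨fun ⟨_, _, ha⟩ j hj => (ha j hj).trans (ha i rfl).symm, fun h => ⟨i, rfl, h⟩⟩

lemma trace_pinch (M : Matrix I I ℂ) : (pinch f M).trace = M.trace := by
  simp [pinch, trace]

variable [DecidableEq I]

lemma pinch_const_mul_self (c : ℂ) :
    pinch f (of fun _ _ => c) * pinch f (of fun _ _ => c) =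
      diagonal (fun i => blockSize f i * c) * pinch f (of fun _ _ => c) := by
  ext i j
  rw [diagonal_mul, mul_apply]
  simp only [pinch, of_apply]
  by_cases hij : f i = f j
  · have hterm : ∀ k, (if f i = f k then c else 0) * (if f k = f j then c else 0) =
        if f k = f i then c * c else 0 := fun k => by
      by_cases hik : f k = f i <;> simp_all [eq_comm]
    simp_rw [hterm, ← Finset.sum_filter, Finset.sum_const, blockSize, nsmul_eq_mul, if_pos hij]
    ring
  · rw [if_neg hij, mul_zero]
    refine Finset.sum_eq_zero fun k _ => ?_
    by_cases hik : f i = f k <;> simp_all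

lemma pinch_const_mul_sub (c a : ℂ) :
    pinch f (of fun _ _ => c) * (pinch f (of fun _ _ => c) - diagonal fun _ => a) =
      diagonal (fun i => blockSize f i * c - a) * pinch f (of fun _ _ => c) := by
  rw [mul_sub, pinch_const_mul_self, ← scalar_apply, ← (scalar_commute a (.all a) _).eq,
    scalar_apply, ← sub_mul, diagonal_sub]

lemma aeval_pinch_const_eq_zero (hN : ∀ i, blockSize f i ≤ 2) (c : ℝ) :
    aeval (pinch f (of fun _ _ => (c : ℂ))) (X * (X - C c) * (X - C (2 * c))) = 0 := by
  rw [map_mul, map_mul, map_sub, map_sub, aeval_X, aeval_C, aeval_C]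
  simp only [algebraMap_eq_diagonal, Pi.algebraMap_def, Complex.coe_algebraMap]
  rw [pinch_const_mul_sub, mul_assoc, pinch_const_mul_sub, ← mul_assoc, diagonal_mul_diagonal]
  have hzero :
      (fun i => (blockSize f i * (c : ℂ) - c) * (blockSize f i * c - (2 * c : ℝ))) = 0 :=
    funext fun i => by rcases blockSize_eq_one_or_two f hN i with h | h <;> simp [h]
  rw [hzero, diagonal_zero', zero_mul]

lemma trace_pinch_const_mul_self (c : ℂ) :
    (pinch f (of fun _ _ => c) * pinch f (of fun _ _ => c)).trace =
      ∑ i, blockSize f i * c * c := by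
  rw [pinch_const_mul_self]
  simp [trace, pinch]

lemma vnEntropy_pinch_const (hN : ∀ i, blockSize f i ≤ 2) {c : ℝ} (hc : c ≠ 0) :
    vnEntropy (pinch f (of fun _ _ => (c : ℂ))) =
      ∑ i, entEta (blockSize f i * c) / blockSize f i := by
  -- `a x + b x ^ 2` interpolates `entEta` at `0, c, 2c`, which contain the spectrum.
  set a := (4 * entEta c - entEta (2 * c)) / (2 * c)
  set b := (entEta (2 * c) - 2 * entEta c) / (2 * c ^ 2)
  have hq : ∀ x, (X * (X - C c) * (X - C (2 * c))).IsRoot x →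
      entEta x = (a • X + b • X ^ 2 : ℝ[X]).eval x := by
    intro x hx
    simp only [IsRoot, eval_mul, eval_sub, eval_X, eval_C, mul_eq_zero, sub_eq_zero] at hx
    simp only [eval_add, eval_smul, eval_X, eval_pow, smul_eq_mul, a, b]
    rcases hx with (rfl | rfl) | rfl
    · simp [entEta]
    all_goals field_simp; ring
  have h := vnEntropy_eq_trace_aeval ((isHermitian_const c).pinch f)
    (aeval_pinch_const_eq_zero f hN c) hq
  rw [map_add, map_smul, map_smul, aeval_X, aeval_X_pow, trace_add, trace_smul, trace_smul, sq,
    trace_pinch_const_mul_self, trace_pinch] at h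
  have hterm : ∀ i, entEta (blockSize f i * c) / blockSize f i =
      a * c + b * (blockSize f i * c * c) := by
    intro i
    rcases blockSize_eq_one_or_two f hN i with h | h <;>
      simp only [h, a, b, Nat.cast_one, Nat.cast_ofNat, one_mul] <;> field_simp <;> ring_nf
  apply Complex.ofReal_injective
  rw [h, Finset.sum_congr rfl fun i _ => hterm i]
  simp [trace, Finset.mul_sum, Finset.sum_add_distrib]
  ring

end Pinch

lemma blockSize_globalE_le {s r : ℕ} (ES : Fin s → ℤ) {ER : Fin r → ℤ}
    (hER : Function.Injective ER) (p : Fin s × Fin r) : blockSize (globalE ES ER) p ≤ s := by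
  refine (Finset.card_le_card_of_injOn Prod.fst (fun _ _ => Finset.mem_univ _) ?_).trans
    (by simp)
  intro a ha b hb hab
  rw [Finset.mem_coe, Finset.mem_filter] at ha hb
  simp only [globalE, hab] at ha hb
  exact Prod.ext hab (hER (add_left_cancel (ha.2.trans hb.2.symm)))

lemma intCast_finVal_injective (r : ℕ) : Function.Injective fun n : Fin r => (n : ℤ) :=
  fun _ _ h => Fin.ext (Nat.cast_injective h)

section MaxCoherent

variable {I : Type*} [Fintype I]

noncomputable def maxCoherentState (I : Type*) [Fintype I] : Matrix I I ℂ :=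
  of fun _ _ => (((Fintype.card I : ℝ)⁻¹ : ℝ) : ℂ)

lemma kronecker_maxCoherentState (J : Type*) [Fintype J] :
    maxCoherentState I ⊗ₖ maxCoherentState J = maxCoherentState (I × J) := by
  ext
  simp [maxCoherentState, mul_comm]

lemma isIdempotentElem_maxCoherentState : IsIdempotentElem (maxCoherentState I) := by
  ext i j
  have : Nonempty I := ⟨i⟩
  simp [maxCoherentState, mul_apply]

lemma vnEntropy_maxCoherentState [DecidableEq I] : vnEntropy (maxCoherentState I) = 0 :=
  vnEntropy_eq_zero_of_isIdempotentElem (isHermitian_const _) isIdempotentElem_maxCoherentState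

lemma asym_maxCoherentState_of_injective [DecidableEq I] [Nonempty I] {α : Type*}
    [DecidableEq α] {f : I → α} (hf : Function.Injective f) :
    asym f (maxCoherentState I) = Real.log (Fintype.card I) := by
  have h1 : ∀ i, blockSize f i = 1 := fun i => (blockSize_eq_one_iff f i).2 fun _ hj => hf hj
  rw [asym, vnEntropy_maxCoherentState, sub_zero, maxCoherentState,
    vnEntropy_pinch_const f (fun i => (h1 i).le.trans one_le_two)
      (inv_ne_zero (Nat.cast_ne_zero.2 Fintype.card_ne_zero))]
  simp [h1, entEta]

end MaxCoherent

section QubitClock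

variable {k : ℕ}

local notation "F" => globalE (fun m : Fin 2 => (m : ℤ)) (fun n : Fin (k + 1) => (n : ℤ))

lemma blockSize_globalE_val_eq_one_iff (p : Fin 2 × Fin (k + 1)) :
    blockSize F p = 1 ↔ p = (0, 0) ∨ p = (1, Fin.last k) := by
  rw [blockSize_eq_one_iff]
  obtain ⟨⟨m, hm⟩, ⟨n, hn⟩⟩ := p
  simp only [globalE, Prod.forall, Fin.forall_iff, Prod.ext_iff, Fin.ext_iff, Fin.val_last,
    Fin.val_zero, Fin.val_one]
  constructor
  · intro h
    by_contra hne
    rcases (by omega : m = 0 ∧ 0 < n ∨ m = 1 ∧ n < k) with ⟨rfl, hn0⟩ | ⟨rfl, hnk⟩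
    · have := h 1 (by omega) (n - 1) (by omega) (by omega)
      omega
    · have := h 0 (by omega) (n + 1) (by omega) (by omega)
      omega
  · rintro (⟨rfl, rfl⟩ | ⟨rfl, rfl⟩) i hi j hj hij <;> omega

lemma sum_blockSize_globalE_val (g : ℕ → ℝ) :
    ∑ p, g (blockSize F p) = 2 * g 1 + 2 * k * g 2 := by
  set S : Finset (Fin 2 × Fin (k + 1)) := {(0, 0), (1, Fin.last k)}
  have hterm : ∀ p, g (blockSize F p) = g 2 + if p ∈ S then g 1 - g 2 else 0 := by
    intro p
    by_cases hp : p ∈ S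
    · rw [(blockSize_globalE_val_eq_one_iff p).2 (by simpa [S] using hp), if_pos hp]
      ring
    · have h1 := (blockSize_globalE_val_eq_one_iff p).not.2 (by simpa [S] using hp)
      have h12 := blockSize_eq_one_or_two F (blockSize_globalE_le _ (intCast_finVal_injective _)) p
      rw [h12.resolve_left h1, if_neg hp, add_zero]
  rw [Finset.sum_congr rfl fun p _ => hterm p, Finset.sum_add_distrib, Finset.sum_const,
    Finset.sum_ite_mem, Finset.univ_inter, Finset.sum_pair (by simp), Finset.card_univ,
    Fintype.card_prod, Fintype.card_fin, Fintype.card_fin, nsmul_eq_mul]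
  push_cast
  ring

lemma asym_globalE_val_maxCoherentState :
    asym F (maxCoherentState (Fin 2 × Fin (k + 1))) =
      Real.log (k + 1) + Real.log 2 / (k + 1) := by
  set c : ℝ := (Fintype.card (Fin 2 × Fin (k + 1)) : ℝ)⁻¹
  have hc : c = (2 * (k + 1 : ℝ))⁻¹ := by simp [c]
  have hk : (k + 1 : ℝ) ≠ 0 := by positivity
  have hlog_c : Real.log c = -(Real.log 2 + Real.log (k + 1)) := by
    rw [hc, Real.log_inv, Real.log_mul two_ne_zero hk]
  have hlog_2c : Real.log (2 * c) = -Real.log (k + 1) := by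
    rw [hc, ← Real.log_inv]
    congr 1
    field_simp
  rw [asym, vnEntropy_maxCoherentState, sub_zero, maxCoherentState,
    vnEntropy_pinch_const F (blockSize_globalE_le _ (intCast_finVal_injective _))
      (inv_ne_zero (Nat.cast_ne_zero.2 Fintype.card_ne_zero))]
  refine (sum_blockSize_globalE_val fun N => entEta (N * c) / N).trans ?_
  simp only [entEta, Nat.cast_one, Nat.cast_ofNat, one_mul, div_one]
  rw [hlog_c, hlog_2c, hc]
  field_simp
  ring

end QubitClock

/-- high reference localization: with a qubit system and a
d-dimensional maximally coherent clock, the mutual asymmetry is (1 − 1/d)·log 2. -/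
theorem high_reference_localization (d : ℕ) (hd : 1 ≤ d)
    (ρS : Matrix (Fin 2) (Fin 2) ℂ) (hρS : ρS = Matrix.of fun _ _ => 1 / 2)
    (ρR : Matrix (Fin d) (Fin d) ℂ) (hρR : ρR = Matrix.of fun _ _ => 1 / (d : ℂ))
    (ES : Fin 2 → ℤ) (hES : ES = fun m => (m.val : ℤ))
    (ER : Fin d → ℤ) (hER : ER = fun n => (n.val : ℤ)) :
    asym ES ρS = Real.log 2 ∧
    asym ER ρR = Real.log d ∧
    asym (globalE ES ER) (ρS ⊗ₖ ρR) = Real.log d + Real.log 2 / d ∧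
    asym ES ρS + asym ER ρR - asym (globalE ES ER) (ρS ⊗ₖ ρR) =
      (1 - 1 / (d : ℝ)) * Real.log 2 := by
  obtain ⟨k, rfl⟩ : ∃ k, d = k + 1 := ⟨d - 1, by omega⟩
  subst hES hER
  have hS : ρS = maxCoherentState (Fin 2) := by
    subst hρS
    ext
    simp [maxCoherentState]
  have hR : ρR = maxCoherentState (Fin (k + 1)) := by
    subst hρR
    ext
    simp [maxCoherentState]
  have hAS : asym (fun m : Fin 2 => (m.val : ℤ)) ρS = Real.log 2 := by
    rw [hS, asym_maxCoherentState_of_injective (intCast_finVal_injective _)]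
    simp
  have hAR : asym (fun n : Fin (k + 1) => (n.val : ℤ)) ρR = Real.log (k + 1 : ℕ) := by
    rw [hR, asym_maxCoherentState_of_injective (intCast_finVal_injective _)]
    simp
  have hASR : asym (globalE (fun m : Fin 2 => (m.val : ℤ)) (fun n : Fin (k + 1) => (n.val : ℤ)))
      (ρS ⊗ₖ ρR) = Real.log (k + 1 : ℕ) + Real.log 2 / (k + 1 : ℕ) := by
    rw [hS, hR, kronecker_maxCoherentState, asym_globalE_val_maxCoherentState]
    push_cast
    rfl
  refine ⟨hAS, hAR, hASR, ?_⟩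
  rw [hAS, hAR, hASR]
  ring
end
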